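/- Let G = diag(g₁, g₂, g₃) be a diagonal real 3×3 matrix with 0 < g₁ < g₂ < g₃, and let U ∈ O(3). Then for every Q ∈ SO(3) one has tr(G (I₃ − Uᵀ Q U)) ≤ 2 (g₂ + g₃), and equality holds for Q = U D₁ Uᵀ, where D₁ = 2 e₁ e₁ᵀ − I₃ and e₁ is the first standard basis vector of ℝ³. Hence the global maximum of Q ↦ tr(G(I₃ − UᵀQU)) over SO(3) equals 2(g₂ + g₃), the sum of the two largest diagonal entries, doubled. -/

import Mathlib

open Matrix

/-- The matrix `D i = 2 eᵢ eᵢᵀ − I₃`. -/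
def Dmat (i : Fin 3) : Matrix (Fin 3) (Fin 3) ℝ :=
  (2 : ℝ) • vecMulVec (Pi.single i 1) (Pi.single i 1) - 1

/-!
Write `P = UᵀQU ∈ SO(3)`, so that `Φ(Q) = ∑ gᵢ (1 - Pᵢᵢ)` (indices `1, 2, 3` here are
`0, 1, 2` in `Fin 3`). For a rotation `R` the cofactor identities `adj R = Rᵀ` give
`(1 + tr R)(3 - tr R) = ‖R - Rᵀ‖² / 2 ≥ 0`, hence `tr R ≥ -1`. Applied to `R = P` and to
`R = P D₂`, `R = P D₃`, this makes `1 + P₁₁ + P₂₂ + P₃₃`, `1 - P₁₁ + P₂₂ - P₃₃` and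
`1 - P₁₁ - P₂₂ + P₃₃` nonnegative, and `2 (2 (g₂ + g₃) - Φ(Q))` is their combination with
the nonnegative weights `g₂ + g₃`, `g₂ - g₁`, `g₃ - g₁`.
-/

section

variable {n R : Type*} [Fintype n] [DecidableEq n] [CommRing R]

theorem Matrix.adjugate_eq_transpose_of_transpose_mul_self_eq_one {P : Matrix n n R}
    (hP : Pᵀ * P = 1) (hdet : P.det = 1) : P.adjugate = Pᵀ :=
  calc P.adjugate = Pᵀ * P * P.adjugate := by rw [hP, one_mul]
    _ = Pᵀ := by rw [mul_assoc, mul_adjugate, hdet, one_smul, mul_one]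

theorem Matrix.transpose_mul_self_conj_eq_one {Q U : Matrix n n R} (hQ : Qᵀ * Q = 1)
    (hU : Uᵀ * U = 1) : (Uᵀ * Q * U)ᵀ * (Uᵀ * Q * U) = 1 := by
  have hU' : U * Uᵀ = 1 := mul_eq_one_comm.mp hU
  simp only [transpose_mul, transpose_transpose, mul_assoc]
  rw [← mul_assoc U, hU', one_mul, ← mul_assoc Qᵀ, hQ, one_mul, hU]

theorem Matrix.det_conj_eq_det {Q U : Matrix n n R} (hU : Uᵀ * U = 1) :
    (Uᵀ * Q * U).det = Q.det := by
  rw [det_mul, det_mul, mul_right_comm, ← det_mul, hU, det_one, one_mul]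

theorem Matrix.transpose_mul_conj_mul_eq_self {D U : Matrix n n R} (hU : Uᵀ * U = 1) :
    Uᵀ * (U * D * Uᵀ) * U = D := by
  simp only [mul_assoc]
  rw [hU, mul_one, ← mul_assoc, hU, one_mul]

end

theorem Matrix.one_add_trace_mul_three_sub_trace {R : Type*} [CommRing R]
    {P : Matrix (Fin 3) (Fin 3) R} (hP : Pᵀ * P = 1) (hdet : P.det = 1) :
    (1 + P.trace) * (3 - P.trace) =
      (P 2 1 - P 1 2) ^ 2 + (P 0 2 - P 2 0) ^ 2 + (P 1 0 - P 0 1) ^ 2 := by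
  have hadj := adjugate_eq_transpose_of_transpose_mul_self_eq_one hP hdet
  have hrow : P * Pᵀ = 1 := mul_eq_one_comm.mp hP
  have h00 := congrFun₂ hadj 0 0
  have h11 := congrFun₂ hadj 1 1
  have h22 := congrFun₂ hadj 2 2
  have r0 := congrFun₂ hrow 0 0
  have r1 := congrFun₂ hrow 1 1
  have r2 := congrFun₂ hrow 2 2
  simp only [adjugate_fin_three, of_apply, cons_val', cons_val_zero, cons_val_fin_one,
    transpose_apply, cons_val_one, cons_val] at h00 h11 h22
  simp only [mul_apply, transpose_apply, Fin.sum_univ_three, one_apply_eq] at r0 r1 r2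
  rw [trace_fin_three]
  linear_combination (-2 : R) * h00 - 2 * h11 - 2 * h22 - r0 - r1 - r2

theorem Matrix.neg_one_le_trace_of_det_eq_one {R : Type*} [CommRing R] [LinearOrder R]
    [IsStrictOrderedRing R] {P : Matrix (Fin 3) (Fin 3) R} (hP : Pᵀ * P = 1)
    (hdet : P.det = 1) : -1 ≤ P.trace := by
  have h := one_add_trace_mul_three_sub_trace hP hdet
  nlinarith [sq_nonneg (P 2 1 - P 1 2), sq_nonneg (P 0 2 - P 2 0), sq_nonneg (P 1 0 - P 0 1)]

theorem Dmat_eq_diagonal (i : Fin 3) : Dmat i = diagonal fun j => if j = i then 1 else -1 := by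
  ext j k
  by_cases hjk : j = k <;> by_cases hji : j = i <;> simp_all [Dmat, vecMulVec_apply]; norm_num

theorem transpose_Dmat_mul_Dmat (i : Fin 3) : (Dmat i)ᵀ * Dmat i = 1 := by
  rw [Dmat_eq_diagonal, diagonal_transpose, diagonal_mul_diagonal, ← diagonal_one]
  congr 1
  ext j
  split_ifs <;> norm_num

theorem det_Dmat (i : Fin 3) : (Dmat i).det = 1 := by
  rw [Dmat_eq_diagonal, det_diagonal, Fin.prod_univ_three]
  fin_cases i <;> simp

theorem neg_one_le_trace_mul_Dmat {P : Matrix (Fin 3) (Fin 3) ℝ} (hP : Pᵀ * P = 1)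
    (hdet : P.det = 1) (i : Fin 3) : -1 ≤ (P * Dmat i).trace := by
  refine neg_one_le_trace_of_det_eq_one ?_ (by rw [det_mul, hdet, det_Dmat, one_mul])
  rw [transpose_mul, mul_assoc, ← mul_assoc Pᵀ, hP, one_mul, transpose_Dmat_mul_Dmat]

theorem trace_diagonal_mul_one_sub_le {g : Fin 3 → ℝ} (h01 : g 0 ≤ g 1) (h02 : g 0 ≤ g 2)
    (hsum : 0 ≤ g 1 + g 2) {P : Matrix (Fin 3) (Fin 3) ℝ} (hP : Pᵀ * P = 1)
    (hdet : P.det = 1) : (diagonal g * (1 - P)).trace ≤ 2 * (g 1 + g 2) := by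
  have a0 : 0 ≤ 1 + P.trace :=
    neg_le_iff_add_nonneg'.mp (neg_one_le_trace_of_det_eq_one hP hdet)
  have a1 : 0 ≤ 1 + (P * Dmat 1).trace :=
    neg_le_iff_add_nonneg'.mp (neg_one_le_trace_mul_Dmat hP hdet 1)
  have a2 : 0 ≤ 1 + (P * Dmat 2).trace :=
    neg_le_iff_add_nonneg'.mp (neg_one_le_trace_mul_Dmat hP hdet 2)
  simp only [Dmat_eq_diagonal, mul_diagonal, diagonal_mul, trace_fin_three, Matrix.sub_apply,
    one_apply_eq, Fin.isValue, Fin.reduceEq, zero_ne_one, ↓reduceIte, mul_neg, mul_one]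
    at a0 a1 a2 ⊢
  nlinarith [mul_nonneg hsum a0, mul_nonneg (sub_nonneg.mpr h01) a1,
    mul_nonneg (sub_nonneg.mpr h02) a2]

theorem trace_diagonal_mul_one_sub_Dmat_zero (g : Fin 3 → ℝ) :
    (diagonal g * (1 - Dmat 0)).trace = 2 * (g 1 + g 2) := by
  simp [Dmat_eq_diagonal, trace_fin_three]
  ring

theorem global_max_error_function
    (g : Fin 3 → ℝ) (h0 : 0 < g 0) (h01 : g 0 < g 1) (h12 : g 1 < g 2)
    (U : Matrix (Fin 3) (Fin 3) ℝ) (hU : Uᵀ * U = 1) :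
    (∀ Q : Matrix (Fin 3) (Fin 3) ℝ, Qᵀ * Q = 1 → Q.det = 1 →
        (diagonal g * (1 - Uᵀ * Q * U)).trace ≤ 2 * (g 1 + g 2)) ∧
    (diagonal g * (1 - Uᵀ * (U * Dmat 0 * Uᵀ) * U)).trace = 2 * (g 1 + g 2) := by
  refine ⟨fun Q hQ hQdet => ?_, ?_⟩
  · exact trace_diagonal_mul_one_sub_le h01.le (h01.trans h12).le (by linarith)
      (transpose_mul_self_conj_eq_one hQ hU) (by rw [det_conj_eq_det hU, hQdet])
  · rw [transpose_mul_conj_mul_eq_self hU, trace_diagonal_mul_one_sub_Dmat_zero]
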